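/- arXiv:2605.07913 — 2 statements merged into one kernel-verified Lean document; each statement's English description precedes it below -/
import Mathlib

section
/- Let n ≥ 3, κ > 0, and let v(x) = xₙ + b + c·|x|^{2-n} + (d' · x')·|x|^{-n} with max(|b|, |c|, |d'|) ≤ κ. Then there exists a constant C depending only on n such that for every x in the annulus B₄ \ B_{1/4} with |v(x)| < κ, one has | |∇v(x)|² - 1 | ≤ C κ². -/
open Real

lemma hasFDerivAt_norm_rpow_aux {E : Type*} [NormedAddCommGroup E] [InnerProductSpace ℝ E]
    (x : E) (hx : x ≠ 0) (α : ℝ) :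
    HasFDerivAt (fun y : E => ‖y‖ ^ α) ((α * ‖x‖ ^ (α - 2)) • innerSL ℝ x) x := by
  have hxn : (0:ℝ) < ‖x‖ := norm_pos_iff.2 hx
  have hx2 : (0:ℝ) < ‖x‖ ^ 2 := by positivity
  have h2 : HasFDerivAt (fun y : E => ‖y‖ ^ 2) ((2:ℕ) • innerSL ℝ x) x :=
    (hasStrictFDerivAt_norm_sq x).hasFDerivAt
  have h3 : HasDerivAt (fun t : ℝ => t ^ (α/2)) ((α/2) * (‖x‖^2) ^ (α/2 - 1)) (‖x‖^2) :=
    Real.hasDerivAt_rpow_const (Or.inl hx2.ne')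
  have h4 := h3.comp_hasFDerivAt x h2
  have hfun : (fun y : E => ‖y‖ ^ α) = (fun t : ℝ => t ^ (α/2)) ∘ (fun y : E => ‖y‖ ^ 2) := by
    funext y
    simp only [Function.comp_apply]
    rw [← Real.rpow_natCast ‖y‖ 2, ← Real.rpow_mul (norm_nonneg y)]
    norm_num
    congr 1
    ring
  rw [hfun]
  refine h4.congr_fderiv ?_
  have hsq : ((‖x‖:ℝ)^2) ^ (α/2 - 1) = ‖x‖ ^ (α - 2) := by
    rw [← Real.rpow_natCast ‖x‖ 2, ← Real.rpow_mul (norm_nonneg x)]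
    ring_nf
  ext y
  simp [hsq, smul_smul]
  ring

open InnerProductSpace in
lemma hasGradientAt_v {n : ℕ} (i : Fin n) (b c : ℝ) (d x : EuclideanSpace ℝ (Fin n))
    (hx : x ≠ 0) (α β : ℝ) :
    HasGradientAt (fun y : EuclideanSpace ℝ (Fin n) =>
        y i + b + c * ‖y‖ ^ α + (∑ j, d j * y j) * ‖y‖ ^ β)
      (EuclideanSpace.single i (1:ℝ)
        + (c * (α * ‖x‖ ^ (α - 2)) + (∑ j, d j * x j) * (β * ‖x‖ ^ (β - 2))) • x
        + (‖x‖ ^ β) • d) x := by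
  have hd : ∀ y : EuclideanSpace ℝ (Fin n), (∑ j, d j * y j) = (inner ℝ d y : ℝ) := by
    intro y; simp [PiLp.inner_apply, RCLike.inner_apply, conj_trivial, mul_comm]
  have hfeq : (fun y : EuclideanSpace ℝ (Fin n) =>
        y i + b + c * ‖y‖ ^ α + (∑ j, d j * y j) * ‖y‖ ^ β)
      = (fun y : EuclideanSpace ℝ (Fin n) =>
        (innerSL ℝ (EuclideanSpace.single i (1:ℝ))) y + b + c * ‖y‖ ^ α
          + (innerSL ℝ d) y * ‖y‖ ^ β) := by
    funext y
    simp only [innerSL_apply_apply, EuclideanSpace.inner_single_left, conj_trivial, one_mul, hd y]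
  rw [hfeq]
  have H := (((innerSL ℝ (EuclideanSpace.single i (1:ℝ))).hasFDerivAt (x := x)).add_const b
      |>.add ((hasFDerivAt_norm_rpow_aux x hx α).const_mul c)).add
      (((innerSL ℝ d).hasFDerivAt (x := x)).mul (hasFDerivAt_norm_rpow_aux x hx β))
  rw [hasGradientAt_iff_hasFDerivAt]
  refine H.congr_fderiv ?_
  ext y
  rw [hd x]
  simp [toDual_apply_apply, inner_add_left, inner_smul_left, EuclideanSpace.inner_single_left,
    real_inner_comm]
  ring

set_option maxHeartbeats 1000000 in
theorem stmt5 (n : ℕ) (hn : 3 ≤ n) :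
    ∃ C : ℝ, 0 < C ∧
      ∀ (κ b c : ℝ) (d : EuclideanSpace ℝ (Fin n)), 0 < κ →
        d ⟨n - 1, by omega⟩ = 0 → |b| ≤ κ → |c| ≤ κ → ‖d‖ ≤ κ →
        ∀ x : EuclideanSpace ℝ (Fin n),
          x ∈ Metric.ball (0 : EuclideanSpace ℝ (Fin n)) 4 \ Metric.closedBall 0 (1/4) →
          |x ⟨n - 1, by omega⟩ + b + c * ‖x‖ ^ ((2:ℝ) - (n:ℝ))
            + (∑ i, d i * x i) * ‖x‖ ^ (-(n:ℝ))| < κ →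
          |‖gradient (fun y : EuclideanSpace ℝ (Fin n) =>
              y ⟨n - 1, by omega⟩ + b + c * ‖y‖ ^ ((2:ℝ) - (n:ℝ))
                + (∑ i, d i * y i) * ‖y‖ ^ (-(n:ℝ))) x‖ ^ 2 - 1| ≤ C * κ ^ 2 := by
  have hn3 : (3:ℝ) ≤ (n:ℝ) := by exact_mod_cast hn
  set M : ℝ := (4:ℝ) ^ ((n:ℝ) + 2) with hM
  have hM0 : 0 < M := Real.rpow_pos_of_pos (by norm_num) _
  have hM1 : (1:ℝ) ≤ M := by
    have : (4:ℝ) ^ (0:ℝ) ≤ M := Real.rpow_le_rpow_of_exponent_le (by norm_num) (by positivity)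
    simpa using this
  refine ⟨511 * (n:ℝ)^2 * M^2, by positivity, ?_⟩
  intro κ b c d hκ hdn hb hc hd x hx hv
  set i : Fin n := ⟨n - 1, by omega⟩ with hi
  set α : ℝ := (2:ℝ) - (n:ℝ) with hα
  set β : ℝ := -(n:ℝ) with hβ
  have hx1 : ‖x‖ < 4 := by
    have := hx.1; rwa [Metric.mem_ball, dist_zero_right] at this
  have hx2 : (1/4 : ℝ) < ‖x‖ := by
    have := hx.2; rw [Metric.mem_closedBall, dist_zero_right] at this; linarith [not_le.1 this]
  have hxne : x ≠ 0 := by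
    intro h; rw [h, norm_zero] at hx2; norm_num at hx2
  set r : ℝ := ‖x‖ with hr
  have hr0 : 0 < r := by linarith
  -- rpow bounds
  have hkey : ∀ s : ℝ, -(n:ℝ) - 2 ≤ s → s ≤ 0 → r ^ s ≤ M := by
    intro s h1 h2
    calc r ^ s ≤ (1/4 : ℝ) ^ s := Real.rpow_le_rpow_of_nonpos (by norm_num) hx2.le h2
      _ = (4:ℝ) ^ (-s) := by
          rw [one_div, Real.inv_rpow (by norm_num : (0:ℝ) ≤ 4), ← Real.rpow_neg (by norm_num)]
      _ ≤ M := Real.rpow_le_rpow_of_exponent_le (by norm_num) (by linarith)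
  have hbound1 : r ^ (α - 2) ≤ M := hkey _ (by rw [hα]; linarith) (by rw [hα]; linarith)
  have hbound2 : r ^ (β - 2) ≤ M := hkey _ (by rw [hβ]) (by rw [hβ]; linarith)
  have hbound3 : r ^ β ≤ M := hkey _ (by rw [hβ]; linarith) (by rw [hβ]; linarith)
  have hbound4 : r ^ α ≤ M := hkey _ (by rw [hα]; linarith) (by rw [hα]; linarith)
  have hpos1 : 0 ≤ r ^ (α - 2) := (Real.rpow_pos_of_pos hr0 _).le
  have hpos2 : 0 ≤ r ^ (β - 2) := (Real.rpow_pos_of_pos hr0 _).le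
  have hpos3 : 0 ≤ r ^ β := (Real.rpow_pos_of_pos hr0 _).le
  have hpos4 : 0 ≤ r ^ α := (Real.rpow_pos_of_pos hr0 _).le
  -- gradient
  set p : ℝ := ∑ j, d j * x j with hp
  set A : ℝ := c * (α * r ^ (α - 2)) + p * (β * r ^ (β - 2)) with hA
  set e : EuclideanSpace ℝ (Fin n) := EuclideanSpace.single i (1:ℝ) with he
  set w : EuclideanSpace ℝ (Fin n) := A • x + (r ^ β) • d with hw
  have hgrad : gradient (fun y : EuclideanSpace ℝ (Fin n) =>
      y i + b + c * ‖y‖ ^ α + (∑ j, d j * y j) * ‖y‖ ^ β) x = e + A • x + (r ^ β) • d :=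
    (hasGradientAt_v i b c d x hxne α β).gradient
  rw [hgrad, add_assoc]
  -- p bound
  have hpinner : p = (inner ℝ d x : ℝ) := by
    rw [hp]; simp [PiLp.inner_apply, RCLike.inner_apply, conj_trivial, mul_comm]
  have hpb : |p| ≤ 4 * κ := by
    rw [hpinner]
    calc |(inner ℝ d x : ℝ)| ≤ ‖d‖ * ‖x‖ := abs_real_inner_le_norm d x
      _ ≤ κ * 4 := by
          apply mul_le_mul hd (le_of_lt hx1) (norm_nonneg x) hκ.le
      _ = 4 * κ := by ring
  -- |α|, |β| bounds
  have hαabs : |α| ≤ (n:ℝ) := by rw [hα, abs_of_nonpos (by linarith)]; linarith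
  have hβabs : |β| ≤ (n:ℝ) := by rw [hβ, abs_of_nonpos (by linarith)]; linarith
  -- A bound
  have hAb : |A| ≤ 5 * (n:ℝ) * M * κ := by
    have h1 : |c * (α * r ^ (α - 2))| ≤ κ * ((n:ℝ) * M) := by
      rw [abs_mul, abs_mul, abs_of_nonneg hpos1]
      apply mul_le_mul hc (mul_le_mul hαabs hbound1 hpos1 (by linarith)) (by positivity) hκ.le
    have h2 : |p * (β * r ^ (β - 2))| ≤ (4 * κ) * ((n:ℝ) * M) := by
      rw [abs_mul, abs_mul, abs_of_nonneg hpos2]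
      apply mul_le_mul hpb (mul_le_mul hβabs hbound2 hpos2 (by linarith)) (by positivity)
        (by positivity)
    calc |A| ≤ |c * (α * r ^ (α - 2))| + |p * (β * r ^ (β - 2))| := abs_add_le _ _
      _ ≤ κ * ((n:ℝ) * M) + (4 * κ) * ((n:ℝ) * M) := add_le_add h1 h2
      _ = 5 * (n:ℝ) * M * κ := by ring
  -- w bound
  have hwb : ‖w‖ ≤ 21 * (n:ℝ) * M * κ := by
    have h1 : ‖A • x‖ ≤ (5 * (n:ℝ) * M * κ) * 4 := by
      rw [norm_smul]
      apply mul_le_mul hAb hx1.le (norm_nonneg x) (by positivity)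
    have h2 : ‖(r ^ β) • d‖ ≤ M * κ := by
      rw [norm_smul, Real.norm_eq_abs, abs_of_nonneg hpos3]
      apply mul_le_mul hbound3 hd (norm_nonneg d) hM0.le
    calc ‖w‖ ≤ ‖A • x‖ + ‖(r ^ β) • d‖ := norm_add_le _ _
      _ ≤ (5 * (n:ℝ) * M * κ) * 4 + M * κ := add_le_add h1 h2
      _ ≤ 21 * (n:ℝ) * M * κ := by nlinarith [mul_pos hM0 hκ, hn3]
  -- |x i| bound
  have hxi : |x i| ≤ 7 * M * κ := by
    have h1 : |c * r ^ α| ≤ κ * M := by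
      rw [abs_mul, abs_of_nonneg hpos4]
      exact mul_le_mul hc hbound4 hpos4 hκ.le
    have h2 : |p * r ^ β| ≤ 4 * κ * M := by
      rw [abs_mul, abs_of_nonneg hpos3]
      exact mul_le_mul hpb hbound3 hpos3 (by positivity)
    have h3 : |x i + b + c * r ^ α + p * r ^ β| < κ := hv
    have h4 : |x i| ≤ |x i + b + c * r ^ α + p * r ^ β| + |b| + |c * r ^ α| + |p * r ^ β| := by
      have := abs_add_le (x i + b + c * r ^ α + p * r ^ β) (-(b + c * r ^ α + p * r ^ β))
      simp only [add_neg_cancel_right] at this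
      calc |x i| = |x i + b + c * r ^ α + p * r ^ β - (b + c * r ^ α + p * r ^ β)| := by ring_nf
        _ ≤ |x i + b + c * r ^ α + p * r ^ β| + |b + c * r ^ α + p * r ^ β| := abs_sub _ _
        _ ≤ _ := by
            have := abs_add_le (b + c * r ^ α) (p * r ^ β)
            have := abs_add_le b (c * r ^ α)
            linarith [abs_add_le (b + c * r ^ α) (p * r ^ β), abs_add_le b (c * r ^ α)]
    nlinarith
  -- expand norm squared
  have hnormsq : ‖e + w‖ ^ 2 = ‖e‖ ^ 2 + 2 * (inner ℝ e w : ℝ) + ‖w‖ ^ 2 :=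
    norm_add_sq_real e w
  have hne : ‖e‖ = 1 := by rw [he, EuclideanSpace.norm_single]; norm_num
  have hinner : (inner ℝ e w : ℝ) = A * x i := by
    rw [he, hw]
    rw [inner_add_right, real_inner_smul_right, real_inner_smul_right]
    have h1 : (inner ℝ (EuclideanSpace.single i (1:ℝ)) x : ℝ) = x i := by
      simp [EuclideanSpace.inner_single_left]
    have h2 : (inner ℝ (EuclideanSpace.single i (1:ℝ)) d : ℝ) = d i := by
      simp [EuclideanSpace.inner_single_left]
    rw [h1, h2, hdn]
    ring
  rw [hnormsq, hne, hinner]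
  have habs : |1 ^ 2 + 2 * (A * x i) + ‖w‖ ^ 2 - 1| ≤ 2 * |A| * |x i| + ‖w‖ ^ 2 := by
    have h1 : 1 ^ 2 + 2 * (A * x i) + ‖w‖ ^ 2 - 1 = 2 * (A * x i) + ‖w‖ ^ 2 := by ring
    rw [h1]
    calc |2 * (A * x i) + ‖w‖ ^ 2| ≤ |2 * (A * x i)| + |‖w‖ ^ 2| := abs_add_le _ _
      _ = 2 * |A| * |x i| + ‖w‖ ^ 2 := by
          rw [abs_mul, abs_mul, abs_of_nonneg (by norm_num : (0:ℝ) ≤ 2),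
            abs_of_nonneg (by positivity : (0:ℝ) ≤ ‖w‖ ^ 2)]
          ring
  refine habs.trans ?_
  have hw2 : ‖w‖ ^ 2 ≤ (21 * (n:ℝ) * M * κ) ^ 2 := by
    apply pow_le_pow_left₀ (norm_nonneg w) hwb
  have hAx : 2 * |A| * |x i| ≤ 2 * (5 * (n:ℝ) * M * κ) * (7 * M * κ) := by
    apply mul_le_mul _ hxi (abs_nonneg _) (by positivity)
    apply mul_le_mul_of_nonneg_left hAb (by norm_num)
  have hnn : (1:ℝ) ≤ (n:ℝ) := by linarith
  calc 2 * |A| * |x i| + ‖w‖ ^ 2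
      ≤ 2 * (5 * (n:ℝ) * M * κ) * (7 * M * κ) + (21 * (n:ℝ) * M * κ) ^ 2 :=
        add_le_add hAx hw2
    _ ≤ 511 * (n:ℝ)^2 * M^2 * κ ^ 2 := by nlinarith
end

section
/- Let u: ℝⁿ → [0,∞) be continuous and suppose that for every t in a set T ⊂ [0,∞) we have: u(x', xₙ) ≥ u(x', 2t - xₙ) for all xₙ ≥ t, and ∂_{xₙ} u > 0 on {xₙ > t} ∩ closure({u > 0}). Then T is upward closed: if t ∈ T and s > t, then s ∈ T. -/
open Filter Topology Set

/-- 1-D monotonicity lemma: a continuous nonnegative function with positive derivative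
wherever it is positive (beyond `t`) is monotone on `[t, ∞)`. -/
lemma monoAux (g : ℝ → ℝ) (hg : Continuous g) (hnn : ∀ τ, 0 ≤ g τ) (t : ℝ)
    (hd : ∀ c, t < c → 0 < g c → ∃ d, 0 < d ∧ HasDerivAt g d c) :
    MonotoneOn g (Set.Ici t) := by
  have step1 : ∀ a b, t < a → a ≤ b → g a ≤ g b := by
    intro a b hta hab
    by_contra hcon
    push_neg at hcon
    set K : Set ℝ := Set.Icc a b ∩ g ⁻¹' Set.Ici (g a) with hK
    have hKc : IsCompact K := isCompact_Icc.inter_right (isClosed_Ici.preimage hg)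
    have hKne : K.Nonempty := ⟨a, ⟨le_refl a, hab⟩, le_refl (g a)⟩
    obtain ⟨cc, hccK, hccub⟩ := hKc.exists_isGreatest hKne
    have hccb : cc < b := by
      rcases lt_or_eq_of_le hccK.1.2 with h | h
      · exact h
      · exfalso; have := hccK.2; rw [h] at this
        exact absurd this (not_le.mpr hcon)
    have hgc : 0 < g cc := lt_of_le_of_lt (hnn b) (lt_of_lt_of_le hcon hccK.2)
    have htc : t < cc := lt_of_lt_of_le hta hccK.1.1
    obtain ⟨d, hd0, hder⟩ := hd cc htc hgc
    have hslope : ∀ᶠ τ in 𝓝[≠] cc, 0 < slope g cc τ :=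
      (hasDerivAt_iff_tendsto_slope.mp hder).eventually (eventually_gt_nhds hd0)
    have hslope' : ∀ᶠ τ in 𝓝[>] cc, 0 < slope g cc τ :=
      hslope.filter_mono (nhdsWithin_mono _ fun y hy => ne_of_gt hy)
    have hIoc : Set.Ioc cc b ∈ 𝓝[>] cc := Ioc_mem_nhdsGT_of_mem ⟨le_refl _, hccb⟩
    obtain ⟨τ, hτs, hτm⟩ := (hslope'.and (eventually_of_mem hIoc fun y hy => hy)).exists
    have hτc : cc < τ := hτm.1
    have : g cc < g τ := by
      have := hτs
      rw [slope_def_field] at this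
      have h1 : 0 < τ - cc := sub_pos.mpr hτc
      rcases div_pos_iff.mp this with ⟨h2, _⟩ | ⟨_, h3⟩
      · linarith
      · linarith
    have hτK : τ ∈ K := ⟨⟨le_trans hccK.1.1 (le_of_lt hτc), hτm.2⟩, le_trans hccK.2 (le_of_lt this)⟩
    exact absurd (hccub hτK) (not_le.mpr hτc)
  intro a ha b hb hab
  rcases eq_or_lt_of_le (show t ≤ a from ha) with h | h
  · rcases eq_or_lt_of_le hab with h2 | h2
    · rw [h2]
    · -- a = t, a < b
      have hb' : t < b := h ▸ h2
      have htend : Tendsto g (𝓝[>] a) (𝓝 (g a)) :=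
        (hg.continuousAt.continuousWithinAt).tendsto
      have hev : ∀ᶠ τ in 𝓝[>] a, g τ ≤ g b := by
        filter_upwards [Ioc_mem_nhdsGT_of_mem ⟨le_refl a, h2⟩] with τ hτ
        exact step1 τ b (h ▸ hτ.1) hτ.2
      exact le_of_tendsto htend hev
  · exact step1 a b h hab

def movingPlaneSet (n : ℕ) (hn : 1 ≤ n) (u : (Fin n → ℝ) → ℝ) : Set ℝ :=
  {t | 0 ≤ t ∧
    (∀ x : Fin n → ℝ, t ≤ x ⟨n - 1, by omega⟩ →
      u (Function.update x ⟨n - 1, by omega⟩ (2 * t - x ⟨n - 1, by omega⟩)) ≤ u x) ∧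
    (∀ x : Fin n → ℝ, t < x ⟨n - 1, by omega⟩ → x ∈ closure {y | 0 < u y} →
      0 < fderiv ℝ u x (Pi.single ⟨n - 1, by omega⟩ (1:ℝ)))}

theorem stmt16 (n : ℕ) (hn : 1 ≤ n) (u : (Fin n → ℝ) → ℝ)
    (hcont : Continuous u) (hnonneg : ∀ x, 0 ≤ u x)
    (t s : ℝ) (ht : t ∈ movingPlaneSet n hn u) (hts : t < s) :
    s ∈ movingPlaneSet n hn u := by
  obtain ⟨ht0, hrefl, hder⟩ := ht
  set N : Fin n := ⟨n - 1, by omega⟩ with hN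
  -- monotonicity of u along vertical lines, on [t, ∞)
  have mono : ∀ x : Fin n → ℝ, MonotoneOn (fun τ => u (Function.update x N τ)) (Set.Ici t) := by
    intro x
    set v : Fin n → ℝ := Pi.single N (1:ℝ) with hv
    have hline : ∀ τ : ℝ, Function.update x N τ = x + (τ - x N) • v := by
      intro τ
      funext i
      by_cases h : i = N
      · subst h; simp [Function.update_self, hv]
      · simp [Function.update_of_ne h, hv, Pi.single_eq_of_ne h]
    apply monoAux
    · have : Continuous fun τ : ℝ => x + (τ - x N) • v := by continuity
      simp only [hline]
      exact hcont.comp this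
    · intro τ; exact hnonneg _
    · intro c htc hgc
      set p := Function.update x N c with hp
      have hpmem : p ∈ closure {y | 0 < u y} := subset_closure hgc
      have hpc : t < p N := by rw [hp, Function.update_self]; exact htc
      have hpos := hder p hpc hpmem
      have hdiff : DifferentiableAt ℝ u p := by
        by_contra h
        rw [fderiv_zero_of_not_differentiableAt h] at hpos
        simp at hpos
      refine ⟨fderiv ℝ u p v, hpos, ?_⟩
      have hL : HasDerivAt (fun τ : ℝ => x + (τ - x N) • v) v c := by
        have h1 : HasDerivAt (fun τ : ℝ => τ - x N) 1 c :=
          (hasDerivAt_id c).sub_const (x N)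
        have h2 := h1.smul_const v
        simpa using h2.const_add x
      have hfun : (fun τ : ℝ => Function.update x N τ) = (fun τ => x + (τ - x N) • v) :=
        funext hline
      have hLc : HasDerivAt (fun τ : ℝ => Function.update x N τ) v c := hfun ▸ hL
      exact hdiff.hasFDerivAt.comp_hasDerivAt c hLc
  refine ⟨le_trans ht0 (le_of_lt hts), ?_, ?_⟩
  · intro x hx
    set a := x N with ha
    have hsa : s ≤ a := hx
    have hux : u x = u (Function.update x N a) := by rw [Function.update_eq_self]
    by_cases hcase : t ≤ 2 * s - a
    · -- 2s - a ∈ [t, a]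
      have h1 : (2 * s - a : ℝ) ≤ a := by linarith
      calc u (Function.update x N (2 * s - a)) ≤ u (Function.update x N a) :=
            mono x hcase (le_trans hcase h1) h1
        _ = u x := hux.symm
    · push_neg at hcase
      set b := a - 2 * s + 2 * t with hb
      have htb : t ≤ b := by simp only [hb]; linarith
      have hba : b ≤ a := by simp only [hb]; linarith
      have hx1 : t ≤ (Function.update x N b) N := by rw [Function.update_self]; exact htb
      have hr := hrefl (Function.update x N b) hx1
      rw [Function.update_self, Function.update_idem] at hr
      have h2tb : 2 * t - b = 2 * s - a := by simp only [hb]; ring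
      rw [h2tb] at hr
      calc u (Function.update x N (2 * s - a)) ≤ u (Function.update x N b) := hr
        _ ≤ u (Function.update x N a) := mono x htb (le_trans htb hba) hba
        _ = u x := hux.symm
  · intro x hx hxc
    exact hder x (lt_trans hts hx) hxc
end
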